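/- The clique-expansion G' of a claw-free graph G (each vertex replaced by a (k+1)-clique, each edge by a complete join) is claw-free. -/

import Mathlib

open SimpleGraph

/-- Closed neighborhood of a set of vertices: `N[S]`. -/
def closedNbhd {V : Type*} (G : SimpleGraph V) (S : Set V) : Set V :=
  S ∪ {v | ∃ u ∈ S, G.Adj u v}

/-- The monitored sets `P^i(S)` of the k-power domination process:
`P^0(S) = N[S]`, `P^{i+1}(S) = ⋃ {N[v] : v ∈ P^i(S), |N[v] \ P^i(S)| ≤ k}`. -/
def monitored {V : Type*} (G : SimpleGraph V) (k : ℕ) (S : Set V) : ℕ → Set V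
  | 0 => closedNbhd G S
  | i + 1 => {w | ∃ v ∈ monitored G k S i,
      (closedNbhd G {v} \ monitored G k S i).ncard ≤ k ∧ w ∈ closedNbhd G {v}}

/-- `P^∞(S)`, realized as `P^{|V|}(S)` on a finite vertex type. -/
def monitoredInf {V : Type*} (G : SimpleGraph V) (k : ℕ) (S : Set V) : Set V :=
  monitored G k S (Nat.card V)

/-- `S` is a k-power dominating set. -/
def IsKPDS {V : Type*} (G : SimpleGraph V) (k : ℕ) (S : Set V) : Prop :=
  monitoredInf G k S = Set.univ

/-- The k-power domination number `γ_{p,k}(G)`. -/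
noncomputable def powerDomNumber {V : Type*} (G : SimpleGraph V) (k : ℕ) : ℕ :=
  sInf {m | ∃ S : Set V, S.Finite ∧ S.ncard = m ∧ IsKPDS G k S}

/-- A k-fort: a nonempty set `F` such that every vertex of `N(F) \ F`
has at least `k+1` neighbors in `F`. -/
def IsKFort {V : Type*} (G : SimpleGraph V) (k : ℕ) (F : Set V) : Prop :=
  F.Nonempty ∧ ∀ v ∈ closedNbhd G F \ F, k + 1 ≤ (G.neighborSet v ∩ F).ncard

/-- Claw-free: no induced `K_{1,3}`. -/
def ClawFree {V : Type*} (G : SimpleGraph V) : Prop :=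
  ∀ u a b c : V, G.Adj u a → G.Adj u b → G.Adj u c → a ≠ b → a ≠ c → b ≠ c →
    G.Adj a b ∨ G.Adj a c ∨ G.Adj b c

/-- `r`-regular. -/
def RegularOfDegree {V : Type*} (G : SimpleGraph V) (r : ℕ) : Prop :=
  ∀ v : V, (G.neighborSet v).ncard = r

/-- The domination number `γ(G)`. -/
noncomputable def domNumber {V : Type*} (G : SimpleGraph V) : ℕ :=
  sInf {m | ∃ S : Set V, S.Finite ∧ S.ncard = m ∧
    ∀ v : V, v ∈ S ∨ ∃ u ∈ S, G.Adj v u}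

/-- The total domination number `γ_t(G)`. -/
noncomputable def totalDomNumber {V : Type*} (G : SimpleGraph V) : ℕ :=
  sInf {m | ∃ S : Set V, S.Finite ∧ S.ncard = m ∧ ∀ v : V, ∃ u ∈ S, G.Adj v u}

/-- Replace each vertex of `G` by a clique of size `m`, and each edge by a complete
join between the corresponding cliques. -/
def cliqueExpansion {V : Type*} (G : SimpleGraph V) (m : ℕ) :
    SimpleGraph (V × Fin m) where
  Adj p p' := G.Adj p.1 p'.1 ∨ (p.1 = p'.1 ∧ p.2 ≠ p'.2)
  symm := by
    constructor
    intro p p' h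
    rcases h with h | ⟨h1, h2⟩
    · exact Or.inl h.symm
    · exact Or.inr ⟨h1.symm, h2.symm⟩
  loopless := by
    constructor
    intro p h
    rcases h with h | ⟨_, h2⟩
    · exact G.irrefl h
    · exact h2 rfl

/-! Two vertices of the same clique are adjacent, so the leaves of a claw in the expansion lie in
pairwise distinct, nonadjacent cliques; and the centre cannot lie in the clique of a leaf, since it
would then see the other leaves from that clique. Projecting to `G` therefore gives a claw in `G`. -/

section cliqueExpansion

variable {V : Type*} {G : SimpleGraph V} {m : ℕ} {u p q : V × Fin m}

theorem cliqueExpansion_adj_of_fst_eq (hpq : p ≠ q) (h : p.1 = q.1) :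
    (cliqueExpansion G m).Adj p q :=
  Or.inr ⟨h, fun h₂ => hpq (Prod.ext h h₂)⟩

theorem cliqueExpansion_fst_ne_of_not_adj (hpq : p ≠ q) (h : ¬(cliqueExpansion G m).Adj p q) :
    p.1 ≠ q.1 :=
  fun h₁ => h (cliqueExpansion_adj_of_fst_eq hpq h₁)

theorem cliqueExpansion_fst_not_adj_of_not_adj (h : ¬(cliqueExpansion G m).Adj p q) :
    ¬G.Adj p.1 q.1 :=
  fun h₁ => h (Or.inl h₁)

theorem cliqueExpansion_fst_adj_of_not_adj (hup : (cliqueExpansion G m).Adj u p)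
    (huq : (cliqueExpansion G m).Adj u q) (hpq : p ≠ q) (h : ¬(cliqueExpansion G m).Adj p q) :
    G.Adj u.1 p.1 := by
  rcases hup with hup | ⟨hup, -⟩
  · exact hup
  · rcases huq with huq | ⟨huq, -⟩
    · exact absurd (hup ▸ huq) (cliqueExpansion_fst_not_adj_of_not_adj h)
    · exact absurd (hup.symm.trans huq) (cliqueExpansion_fst_ne_of_not_adj hpq h)

end cliqueExpansion

theorem cliqueExpansion_clawFree {V : Type*} (G : SimpleGraph V) (k : ℕ)
    (hcf : ClawFree G) : ClawFree (cliqueExpansion G (k + 1)) := by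
  intro u a b c hua hub huc hab hac hbc
  by_contra! ⟨hnab, hnac, hnbc⟩
  have hnba : ¬(cliqueExpansion G (k + 1)).Adj b a := fun h => hnab h.symm
  have hnca : ¬(cliqueExpansion G (k + 1)).Adj c a := fun h => hnac h.symm
  rcases hcf u.1 a.1 b.1 c.1 (cliqueExpansion_fst_adj_of_not_adj hua hub hab hnab)
      (cliqueExpansion_fst_adj_of_not_adj hub hua hab.symm hnba)
      (cliqueExpansion_fst_adj_of_not_adj huc hua hac.symm hnca)
      (cliqueExpansion_fst_ne_of_not_adj hab hnab) (cliqueExpansion_fst_ne_of_not_adj hac hnac)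
      (cliqueExpansion_fst_ne_of_not_adj hbc hnbc) with h | h | h
  exacts [cliqueExpansion_fst_not_adj_of_not_adj hnab h,
    cliqueExpansion_fst_not_adj_of_not_adj hnac h, cliqueExpansion_fst_not_adj_of_not_adj hnbc h]
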